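/- Let λ ∈ (0,1), a ∈ ℝ, σ > 0, Y₀ > 0, T > 0 and M > 0. Then there exists K > 0 such that for every k ≥ K the following holds: if B : [0,∞) → ℝ is continuous with B(0) = 0 and satisfies |B(t) − B(s)| ≤ M·(t − s)^λ for all 0 ≤ s ≤ t ≤ T, and Y is a stopped solution with parameter k driven by B starting from Y₀, then Y(t) > 0 for all t ∈ [0,T] (i.e. the zero-hitting time τ of Y satisfies τ > T). -/

import Mathlib

open scoped ENNReal

/-- The first zero-hitting time `τ = inf{t ≥ 0 : Y t = 0}` of a path `Y`, as an extended
nonnegative real (with `τ = ∞` if `Y` never vanishes on `[0,∞)`). -/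
noncomputable def zeroHitTime (Y : ℝ → ℝ) : ℝ≥0∞ :=
  ⨅ t ∈ {t : ℝ | 0 ≤ t ∧ Y t = 0}, ENNReal.ofReal t

/-- A stopped solution of `dY = (1/2)(k/Y − aY) dt + (σ/2) dB`, `Y 0 = Y₀`, driven by the
path `B`: a continuous function on `[0,∞)` satisfying the integral equation before its
first zero-hitting time `τ` and vanishing from `τ` onwards. -/
def IsStoppedSolution (B : ℝ → ℝ) (k a σ Y₀ : ℝ) (Y : ℝ → ℝ) : Prop :=
  ContinuousOn Y (Set.Ici 0) ∧ Y 0 = Y₀ ∧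
  (∀ t : ℝ, 0 ≤ t → ENNReal.ofReal t < zeroHitTime Y →
    Y t = Y₀ + (1 / 2) * (∫ s in (0:ℝ)..t, (k / Y s - a * Y s)) + (σ / 2) * B t) ∧
  (∀ t : ℝ, 0 ≤ t → zeroHitTime Y ≤ ENNReal.ofReal t → Y t = 0)

/-! Suppose `Y` reaches `0` before time `T`. On the last excursion of `Y` from `Y₀` down to
`Y₀ / 2` the drift `(k/Y − aY)/2` is at least `(k/Y₀ − |a|Y₀)/2`, so the noise has to produce the
drop of `Y₀/2` against it: over the excursion length `δ ∈ (0, T]` this forces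
`Y₀ + (k/Y₀ − |a|Y₀) δ ≤ σ M δ^λ`. For `δ` below `δ₀ = (Y₀/(σM))^(1/λ)` this fails because
`σ M δ^λ < Y₀`, and for `δ ≥ δ₀` it fails as soon as `(k/Y₀ − |a|Y₀) δ₀ ≥ σ M T^λ`. -/

open Set Filter MeasureTheory

theorem eventually_forall_mul_rpow_lt_add_mul {l A ε : ℝ} (T : ℝ) (hl : 0 < l) (hA : 0 < A)
    (hε : 0 < ε) : ∀ᶠ c in atTop, ∀ δ ∈ Ioc 0 T, A * δ ^ l < ε + c * δ := by
  set δ₀ := (ε / A) ^ l⁻¹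
  have hδ₀ : 0 < δ₀ := by positivity
  have hAδ₀ : A * δ₀ ^ l = ε := by
    rw [← Real.rpow_mul (by positivity), inv_mul_cancel₀ hl.ne', Real.rpow_one]
    field_simp
  filter_upwards [eventually_ge_atTop 0, eventually_ge_atTop (A * T ^ l / δ₀)]
    with c hc0 hc δ ⟨hδ, hδT⟩
  rcases lt_or_ge δ δ₀ with hδδ₀ | hδ₀δ
  · calc A * δ ^ l < A * δ₀ ^ l := by gcongr
      _ = ε := hAδ₀
      _ ≤ ε + c * δ := le_add_of_nonneg_right (by positivity)
  · calc A * δ ^ l ≤ A * T ^ l := by gcongr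
      _ ≤ c * δ₀ := (div_le_iff₀ hδ₀).1 hc
      _ ≤ c * δ := by gcongr
      _ < ε + c * δ := lt_add_of_pos_left _ hε

section Hitting

variable {Y : ℝ → ℝ} {a b c : ℝ}

theorem ContinuousOn.exists_first_hitting (hab : a ≤ b) (hY : ContinuousOn Y (Icc a b))
    (ha : c < Y a) (hb : Y b ≤ c) : ∃ u ∈ Icc a b, Y u = c ∧ ∀ r ∈ Ico a u, c < Y r := by
  set Z := Icc a b ∩ Y ⁻¹' Iic c
  have hZ : IsClosed Z := hY.preimage_isClosed_of_isClosed isClosed_Icc isClosed_Iic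
  have hZbdd : BddBelow Z := ⟨a, fun r hr => hr.1.1⟩
  have hu : sInf Z ∈ Z := hZ.csInf_mem ⟨b, ⟨⟨hab, le_rfl⟩, hb⟩⟩ hZbdd
  have hbefore : ∀ r ∈ Ico a (sInf Z), c < Y r := fun r hr => not_le.1 fun hrc =>
    hr.2.not_ge (csInf_le hZbdd ⟨⟨hr.1, hr.2.le.trans hu.1.2⟩, hrc⟩)
  refine ⟨sInf Z, hu.1, ?_, hbefore⟩
  obtain ⟨r, hr, hYr⟩ := intermediate_value_Icc' hu.1.1 (hY.mono (Icc_subset_Icc_right hu.1.2))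
    ⟨hu.2, ha.le⟩
  rcases hr.2.lt_or_eq with hlt | rfl
  · exact absurd hYr (hbefore r ⟨hr.1, hlt⟩).ne'
  · exact hYr

theorem ContinuousOn.exists_last_hitting (hab : a ≤ b) (hY : ContinuousOn Y (Icc a b))
    (ha : c ≤ Y a) (hb : Y b < c) : ∃ s ∈ Icc a b, Y s = c ∧ ∀ r ∈ Ioc s b, Y r < c := by
  set Z := Icc a b ∩ Y ⁻¹' Ici c
  have hZ : IsClosed Z := hY.preimage_isClosed_of_isClosed isClosed_Icc isClosed_Ici
  have hZbdd : BddAbove Z := ⟨b, fun r hr => hr.1.2⟩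
  have hs : sSup Z ∈ Z := hZ.csSup_mem ⟨a, ⟨⟨le_rfl, hab⟩, ha⟩⟩ hZbdd
  have hafter : ∀ r ∈ Ioc (sSup Z) b, Y r < c := fun r hr => not_le.1 fun hrc =>
    hr.1.not_ge (le_csSup hZbdd ⟨⟨hs.1.1.trans hr.1.le, hr.2⟩, hrc⟩)
  refine ⟨sSup Z, hs.1, ?_, hafter⟩
  obtain ⟨r, hr, hYr⟩ := intermediate_value_Icc' hs.1.2 (hY.mono (Icc_subset_Icc_left hs.1.1))
    ⟨hb.le, hs.2⟩
  rcases hr.1.lt_or_eq with hlt | rfl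
  · exact absurd hYr (hafter r ⟨hlt, hr.2⟩).ne
  · exact hYr

theorem ContinuousOn.exists_downcrossing {lo hi : ℝ} (hab : a ≤ b)
    (hY : ContinuousOn Y (Icc a b)) (hlo : lo < hi) (ha : hi ≤ Y a) (hb : Y b ≤ lo) :
    ∃ s u, a ≤ s ∧ s < u ∧ u ≤ b ∧ Y s = hi ∧ Y u = lo ∧ MapsTo Y (Icc s u) (Icc lo hi) := by
  obtain ⟨s, hs, hYs, hafter⟩ := hY.exists_last_hitting hab ha (hb.trans_lt hlo)
  obtain ⟨u, hu, hYu, hbefore⟩ := (hY.mono (Icc_subset_Icc_left hs.1)).exists_first_hitting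
    hs.2 (hYs ▸ hlo) hb
  have hsu : s < u := hu.1.lt_of_ne (by rintro rfl; linarith)
  refine ⟨s, u, hs.1, hsu, hu.2, hYs, hYu, fun r hr => ⟨?_, ?_⟩⟩
  · rcases hr.2.lt_or_eq with hru | rfl
    exacts [(hbefore r ⟨hr.1, hru⟩).le, hYu.ge]
  · rcases hr.1.lt_or_eq with hsr | rfl
    exacts [(hafter r ⟨hsr, hr.2.trans hu.2⟩).le, hYs.le]

end Hitting

theorem ofReal_le_zeroHitTime {Y : ℝ → ℝ} {τ : ℝ} (hY : ∀ r ∈ Ico 0 τ, Y r ≠ 0) :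
    ENNReal.ofReal τ ≤ zeroHitTime Y := by
  refine le_iInf₂ fun r hr => ?_
  rcases lt_or_ge r τ with hrτ | hτr
  · exact absurd hr.2 (hY r ⟨hr.1, hrτ⟩)
  · exact ENNReal.ofReal_le_ofReal hτr

namespace IsStoppedSolution

variable {B Y : ℝ → ℝ} {k a σ Y₀ τ : ℝ}

theorem eq_of_forall_ne_zero (hY : IsStoppedSolution B k a σ Y₀ Y)
    (hne : ∀ r ∈ Ico 0 τ, Y r ≠ 0) {t : ℝ} (ht : t ∈ Ico 0 τ) :
    Y t = Y₀ + (1 / 2) * (∫ s in (0:ℝ)..t, (k / Y s - a * Y s)) + (σ / 2) * B t :=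
  hY.2.2.1 t ht.1 <| ((ENNReal.ofReal_lt_ofReal_iff (ht.1.trans_lt ht.2)).2 ht.2).trans_le
    (ofReal_le_zeroHitTime hne)

theorem continuousOn_drift (hY : IsStoppedSolution B k a σ Y₀ Y) {S : Set ℝ} (hS : S ⊆ Ici 0)
    (hne : ∀ r ∈ S, Y r ≠ 0) : ContinuousOn (fun r => k / Y r - a * Y r) S :=
  (continuousOn_const.div (hY.1.mono hS) hne).sub (continuousOn_const.mul (hY.1.mono hS))

theorem sub_eq_of_forall_ne_zero (hY : IsStoppedSolution B k a σ Y₀ Y)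
    (hne : ∀ r ∈ Ico 0 τ, Y r ≠ 0) {s u : ℝ} (hs : 0 ≤ s) (hsu : s ≤ u) (hu : u < τ) :
    Y u - Y s = (1 / 2) * (∫ r in s..u, (k / Y r - a * Y r)) + (σ / 2) * (B u - B s) := by
  have hcont := hY.continuousOn_drift (S := Icc 0 u) Icc_subset_Ici_self
    fun r hr => hne r ⟨hr.1, hr.2.trans_lt hu⟩
  have hint_u := hcont.intervalIntegrable_of_Icc (μ := volume) (hs.trans hsu)
  have hint_s := (hcont.mono (Icc_subset_Icc_right hsu)).intervalIntegrable_of_Icc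
    (μ := volume) hs
  rw [hY.eq_of_forall_ne_zero hne ⟨hs.trans hsu, hu⟩,
    hY.eq_of_forall_ne_zero hne ⟨hs, hsu.trans_lt hu⟩,
    ← intervalIntegral.integral_interval_sub_left hint_u hint_s]
  ring

theorem exists_add_mul_le_mul_rpow_of_nonpos {l T M : ℝ} (hY : IsStoppedSolution B k a σ Y₀ Y)
    (hk : 0 ≤ k) (hσ : 0 ≤ σ) (hY₀ : 0 < Y₀)
    (hB : ∀ s t : ℝ, 0 ≤ s → s ≤ t → t ≤ T → |B t - B s| ≤ M * (t - s) ^ l)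
    {t : ℝ} (ht : t ∈ Icc 0 T) (hYt : Y t ≤ 0) :
    ∃ δ ∈ Ioc 0 T, Y₀ + (k / Y₀ - |a| * Y₀) * δ ≤ σ * M * δ ^ l := by
  have hYc : ∀ b, ContinuousOn Y (Icc 0 b) := fun b => hY.1.mono Icc_subset_Ici_self
  obtain ⟨τ, hτ, hYτ, hpos⟩ := (hYc t).exists_first_hitting ht.1 (hY.2.1 ▸ hY₀) hYt
  obtain ⟨s, u, hs, hsu, huτ, hYs, hYu, hmaps⟩ := (hYc τ).exists_downcrossing hτ.1
    (half_lt_self hY₀) hY.2.1.ge (hYτ ▸ (half_pos hY₀).le)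
  have hu : u < τ := huτ.lt_of_ne (by rintro rfl; linarith)
  have hincr := hY.sub_eq_of_forall_ne_zero (fun r hr => (hpos r hr).ne') hs hsu.le hu
  have hYpos : ∀ r ∈ Icc s u, 0 < Y r := fun r hr => (half_pos hY₀).trans_le (hmaps hr).1
  have hdrift : (k / Y₀ - |a| * Y₀) * (u - s) ≤ ∫ r in s..u, (k / Y r - a * Y r) := by
    have hint := (hY.continuousOn_drift (fun r hr => hs.trans hr.1) fun r hr => (hYpos r hr).ne')
      |>.intervalIntegrable_of_Icc (μ := volume) hsu.le
    have hpointwise : ∀ r ∈ Icc s u, k / Y₀ - |a| * Y₀ ≤ k / Y r - a * Y r := fun r hr => by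
      have h₁ : k / Y₀ ≤ k / Y r := div_le_div_of_nonneg_left hk (hYpos r hr) (hmaps hr).2
      have h₂ : a * Y r ≤ |a| * Y r := mul_le_mul_of_nonneg_right (le_abs_self a) (hYpos r hr).le
      have h₃ : |a| * Y r ≤ |a| * Y₀ := mul_le_mul_of_nonneg_left (hmaps hr).2 (abs_nonneg a)
      linarith
    calc (k / Y₀ - |a| * Y₀) * (u - s) = ∫ _ in s..u, (k / Y₀ - |a| * Y₀) := by
          rw [intervalIntegral.integral_const, smul_eq_mul, mul_comm]
      _ ≤ _ := intervalIntegral.integral_mono_on hsu.le intervalIntegrable_const hint hpointwise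
  have hnoise : -(M * (u - s) ^ l) ≤ B u - B s :=
    neg_le_of_abs_le (hB s u hs hsu.le (huτ.trans (hτ.2.trans ht.2)))
  refine ⟨u - s, ⟨sub_pos.2 hsu, by linarith [hτ.2, ht.2]⟩, ?_⟩
  linarith [mul_le_mul_of_nonneg_left hnoise hσ]

end IsStoppedSolution

theorem fCIR_positive_on_interval_for_large_k (l a σ Y₀ T M : ℝ)
    (hl0 : 0 < l) (hσ : 0 < σ) (hY₀ : 0 < Y₀) (hM : 0 < M) :
    ∃ K : ℝ, 0 < K ∧ ∀ k : ℝ, K ≤ k → ∀ B Y : ℝ → ℝ, Continuous B → B 0 = 0 →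
      (∀ s t : ℝ, 0 ≤ s → s ≤ t → t ≤ T → |B t - B s| ≤ M * (t - s) ^ l) →
      IsStoppedSolution B k a σ Y₀ Y →
      ∀ t ∈ Set.Icc (0:ℝ) T, 0 < Y t := by
  have hdrift : Tendsto (fun k => k / Y₀ - |a| * Y₀) atTop atTop :=
    tendsto_atTop_add_const_right _ _ (tendsto_id.atTop_div_const hY₀)
  obtain ⟨K, hK⟩ := eventually_atTop.1 <|
    (hdrift.eventually (eventually_forall_mul_rpow_lt_add_mul T hl0 (mul_pos hσ hM) hY₀)).and
      (eventually_ge_atTop 0)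
  refine ⟨max K 1, by positivity, fun k hk B Y _ _ hB hY t ht => not_le.1 fun hYt => ?_⟩
  obtain ⟨hnoroot, hk0⟩ := hK k (le_of_max_le_left hk)
  obtain ⟨δ, hδ, hle⟩ := hY.exists_add_mul_le_mul_rpow_of_nonpos hk0 hσ.le hY₀ hB ht hYt
  exact (hnoroot δ hδ).not_ge hle
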